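/- In the proof of the A-tilted span bound: with $A$ an upper triangular diagonal-dominated substochastic tilting matrix, $h' = \sum_{j=1}^l \lambda_j |x_j\rangle$ where $|x_j\rangle = \mathcal{T}_{j,A}(|y_j\rangle)$ for unit vectors $|y_j\rangle\in W_j$, the coefficients satisfy for every $i\in[l]$: $|\lambda_i| \le \|h'\|_2 \sum_{j=i}^l 2^{j-i}\alpha_{jj}^{-1/2}$. -/

import Mathlib

/-!
Pairing `h'` with `T i (y i)` kills the `emb` component and every `T k` with `k ≠ i`, leaving
`∑_{j ≥ i} λⱼ √(A i j) ⟪y i, y j⟫`. The `j = i` term is `λᵢ √(A i i)`, and since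
`A i j ≤ A i i` every other term is at most `√(A i i) |λⱼ|`, so
`|λᵢ| ≤ ‖h'‖ / √(A i i) + ∑_{j > i} |λⱼ|`. Unrolling this recursion from the last index down,
the tails `∑_{j ≥ i} |λⱼ|` at most double at each step, which produces the weights `2^(j-i)`.
-/

open Finset

lemma Nat.sum_Ico_two_pow_mul_eq (a : ℕ → ℝ) {i n : ℕ} (hi : i < n) :
    ∑ k ∈ Ico i n, (2 : ℝ) ^ (k - i) * a k
      = a i + 2 * ∑ k ∈ Ico (i + 1) n, (2 : ℝ) ^ (k - (i + 1)) * a k := by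
  rw [sum_eq_sum_Ico_succ_bot hi, Nat.sub_self, pow_zero, one_mul, mul_sum]
  congr 1
  refine sum_congr rfl fun k hk => ?_
  rw [show k - i = k - (i + 1) + 1 by grind, pow_succ]
  ring

theorem Nat.le_sum_Ico_two_pow_mul_of_le_add_sum {x a : ℕ → ℝ} {n : ℕ}
    (ha : ∀ k, 0 ≤ a k) (hx : ∀ i < n, x i ≤ a i + ∑ j ∈ Ico (i + 1) n, x j)
    {i : ℕ} (hi : i < n) :
    x i ≤ ∑ k ∈ Ico i n, (2 : ℝ) ^ (k - i) * a k := by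
  set S : ℕ → ℝ := fun i => ∑ k ∈ Ico i n, (2 : ℝ) ^ (k - i) * a k
  have hS : ∀ i < n, S i = a i + 2 * S (i + 1) := fun i hi => sum_Ico_two_pow_mul_eq a hi
  have htail : ∀ i ≤ n, ∑ j ∈ Ico i n, x j ≤ S i := by
    intro i hi
    induction hi using Nat.decreasingInduction with
    | self => simp [S]
    | of_succ k hk ih =>
      rw [sum_eq_sum_Ico_succ_bot hk, hS k hk]
      linarith [hx k hk]
  have hS_nonneg : 0 ≤ S (i + 1) := sum_nonneg fun k _ => mul_nonneg (by positivity) (ha k)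
  linarith [hx i hi, htail (i + 1) hi, hS i hi]

lemma Fin.sum_filter_le_eq_sum_Ico {M : Type*} [AddCommMonoid M] {l : ℕ} (f : ℕ → M)
    (i : Fin l) : ∑ j ∈ univ.filter (fun j => i ≤ j), f j = ∑ k ∈ Ico (i : ℕ) l, f k := by
  rw [filter_le_eq_Ici, ← Fin.map_valEmbedding_Ici, sum_map]
  rfl

lemma Fin.sum_filter_lt_eq_sum_Ico {M : Type*} [AddCommMonoid M] {l : ℕ} (f : ℕ → M)
    (i : Fin l) : ∑ j ∈ univ.filter (fun j => i < j), f j = ∑ k ∈ Ico ((i : ℕ) + 1) l, f k := by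
  rw [filter_lt_eq_Ioi, Ico_add_one_left_eq_Ioo, ← Fin.map_valEmbedding_Ioi, sum_map]
  rfl

theorem Fin.le_sum_two_pow_mul_of_le_add_sum {l : ℕ} {x a : Fin l → ℝ} (ha : ∀ k, 0 ≤ a k)
    (hx : ∀ i, x i ≤ a i + ∑ j ∈ univ.filter (fun j => i < j), x j) (i : Fin l) :
    x i ≤ ∑ j ∈ univ.filter (fun j => i ≤ j), (2 : ℝ) ^ ((j : ℕ) - i) * a j := by
  let extend (f : Fin l → ℝ) (k : ℕ) : ℝ := if h : k < l then f ⟨k, h⟩ else 0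
  have extend_val (f : Fin l → ℝ) (j : Fin l) : extend f j = f j := dif_pos j.2
  have hx' (i : Fin l) :
      extend x i ≤ extend a i + ∑ j ∈ Ico ((i : ℕ) + 1) l, extend x j := by
    simpa only [extend_val, ← Fin.sum_filter_lt_eq_sum_Ico] using hx i
  have key := Nat.le_sum_Ico_two_pow_mul_of_le_add_sum (x := extend x) (a := extend a) (n := l)
    (fun k => by unfold extend; split_ifs <;> simp [ha]) (fun k hk => hx' ⟨k, hk⟩) i.2
  simpa only [extend_val, ← Fin.sum_filter_le_eq_sum_Ico] using key

section Tilted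

variable {ι H E : Type*} [Fintype ι] [LinearOrder ι]
  [NormedAddCommGroup H] [InnerProductSpace ℂ H] [NormedAddCommGroup E] [InnerProductSpace ℂ E]

/-- The paper's `𝒯_{j,A}`, with `emb` in the role of the inclusion `ι` of `ℋ`. -/
noncomputable def tiltedMap (emb : H →ₗᵢ[ℂ] E) (T : ι → H →ₗᵢ[ℂ] E) (A : ι → ι → ℝ) (j : ι) :
    H →ₗ[ℂ] E :=
  (Complex.ofReal (Real.sqrt (1 - ∑ i ∈ univ.filter (fun i => i ≤ j), A i j)))
      • emb.toLinearMap
    + ∑ i ∈ univ.filter (fun i => i ≤ j),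
      (Complex.ofReal (Real.sqrt (A i j))) • (T i).toLinearMap

variable {emb : H →ₗᵢ[ℂ] E} {T : ι → H →ₗᵢ[ℂ] E}

lemma inner_tiltedMap (horth1 : ∀ j, ∀ u v : H, inner ℂ (emb u) (T j v) = 0)
    (horth2 : ∀ i j, i ≠ j → ∀ u v : H, inner ℂ (T i u) (T j v) = 0)
    (A : ι → ι → ℝ) (i j : ι) (u v : H) :
    inner ℂ (T i u) (tiltedMap emb T A j v)
      = if i ≤ j then √(A i j) * inner ℂ u v else 0 := by
  have hemb : inner ℂ (T i u) (emb v) = 0 := by rw [← inner_conj_symm, horth1 i v u, map_zero]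
  simp only [tiltedMap, LinearMap.add_apply, LinearMap.smul_apply, LinearMap.coe_sum,
    Finset.sum_apply, LinearIsometry.coe_toLinearMap, inner_add_right, inner_smul_right,
    inner_sum, hemb, mul_zero, zero_add]
  split_ifs with hij
  · rw [sum_eq_single_of_mem i (by simpa using hij) fun k _ hki => by
      rw [horth2 i k hki.symm, mul_zero], (T i).inner_map_map]
  · exact sum_eq_zero fun k hk => by
      rw [horth2 i k (by rintro rfl; exact hij (by simpa using hk)), mul_zero]

lemma inner_sum_smul_tiltedMap (horth1 : ∀ j, ∀ u v : H, inner ℂ (emb u) (T j v) = 0)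
    (horth2 : ∀ i j, i ≠ j → ∀ u v : H, inner ℂ (T i u) (T j v) = 0)
    (A : ι → ι → ℝ) (lam : ι → ℂ) (y : ι → H) (i : ι) (u : H) :
    inner ℂ (T i u) (∑ j, lam j • tiltedMap emb T A j (y j))
      = ∑ j ∈ univ.filter (fun j => i ≤ j), lam j * √(A i j) * inner ℂ u (y j) := by
  rw [inner_sum, sum_filter]
  refine sum_congr rfl fun j _ => ?_
  rw [inner_smul_right, inner_tiltedMap horth1 horth2]
  split_ifs <;> ring

lemma sum_filter_le_eq_add_sum_filter_lt {M : Type*} [AddCommMonoid M] (f : ι → M) (i : ι) :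
    ∑ j ∈ univ.filter (fun j => i ≤ j), f j
      = f i + ∑ j ∈ univ.filter (fun j => i < j), f j := by
  have : univ.filter (fun j => i ≤ j) = insert i (univ.filter (fun j => i < j)) := by
    ext j; simp [le_iff_eq_or_lt, eq_comm]
  rw [this, sum_insert (by simp)]

theorem norm_coeff_le_of_tiltedMap (horth1 : ∀ j, ∀ u v : H, inner ℂ (emb u) (T j v) = 0)
    (horth2 : ∀ i j, i ≠ j → ∀ u v : H, inner ℂ (T i u) (T j v) = 0)
    {A : ι → ι → ℝ} {i : ι} (hAdiag : ∀ j, i ≤ j → A i j ≤ A i i) (hApos : 0 < A i i)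
    (lam : ι → ℂ) {y : ι → H} (hy : ∀ j, ‖y j‖ = 1) :
    ‖lam i‖ ≤ ‖∑ j, lam j • tiltedMap emb T A j (y j)‖ * A i i ^ (-(1 / 2) : ℝ)
      + ∑ j ∈ univ.filter (fun j => i < j), ‖lam j‖ := by
  set h' := ∑ j, lam j • tiltedMap emb T A j (y j)
  set R := ∑ j ∈ univ.filter (fun j => i < j), lam j * √(A i j) * inner ℂ (y i) (y j)
  have hs : 0 < √(A i i) := Real.sqrt_pos.mpr hApos
  have hsplit : inner ℂ (T i (y i)) h' = lam i * √(A i i) + R := by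
    rw [inner_sum_smul_tiltedMap horth1 horth2, sum_filter_le_eq_add_sum_filter_lt,
      inner_self_eq_norm_sq_to_K, hy i]
    simp [R]
  have hpair : ‖inner ℂ (T i (y i)) h'‖ ≤ ‖h'‖ := by
    simpa [hy i] using norm_inner_le_norm (𝕜 := ℂ) (T i (y i)) h'
  have hterm : ∀ j ∈ univ.filter (fun j => i < j),
      ‖lam j * √(A i j) * inner ℂ (y i) (y j)‖ ≤ √(A i i) * ‖lam j‖ := by
    intro j hj
    have hinner : ‖inner ℂ (y i) (y j)‖ ≤ 1 := by
      simpa [hy] using norm_inner_le_norm (𝕜 := ℂ) (y i) (y j)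
    have hij : i < j := by simpa using hj
    have hsqrt : √(A i j) ≤ √(A i i) := Real.sqrt_le_sqrt (hAdiag j hij.le)
    rw [norm_mul, norm_mul, Complex.norm_real, Real.norm_of_nonneg (Real.sqrt_nonneg _)]
    calc ‖lam j‖ * √(A i j) * ‖inner ℂ (y i) (y j)‖ ≤ ‖lam j‖ * √(A i i) * 1 := by gcongr
      _ = √(A i i) * ‖lam j‖ := by ring
  have key : ‖lam i‖ * √(A i i)
      ≤ ‖h'‖ + √(A i i) * ∑ j ∈ univ.filter (fun j => i < j), ‖lam j‖ :=
    calc ‖lam i‖ * √(A i i) = ‖inner ℂ (T i (y i)) h' - R‖ := by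
          rw [hsplit, add_sub_cancel_right, norm_mul, Complex.norm_real,
            Real.norm_of_nonneg hs.le]
      _ ≤ ‖inner ℂ (T i (y i)) h'‖ + ‖R‖ := norm_sub_le _ _
      _ ≤ ‖h'‖ + ∑ j ∈ univ.filter (fun j => i < j), √(A i i) * ‖lam j‖ :=
          add_le_add hpair ((norm_sum_le _ _).trans (sum_le_sum hterm))
      _ = _ := by rw [mul_sum]
  rw [Real.rpow_neg hApos.le, ← Real.sqrt_eq_rpow, ← div_eq_mul_inv, div_add' _ _ _ hs.ne',
    le_div_iff₀ hs]
  linarith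

end Tilted

theorem stmt6_general {H E : Type*}
    [NormedAddCommGroup H] [InnerProductSpace ℂ H]
    [NormedAddCommGroup E] [InnerProductSpace ℂ E]
    {l : ℕ}
    (emb : H →ₗᵢ[ℂ] E) (T : Fin l → (H →ₗᵢ[ℂ] E))
    (horth1 : ∀ j, ∀ u v : H, (inner ℂ (emb u) (T j v) : ℂ) = 0)
    (horth2 : ∀ i j, i ≠ j → ∀ u v : H, (inner ℂ (T i u) (T j v) : ℂ) = 0)
    (A : Fin l → Fin l → ℝ)
    (hAdiag : ∀ i j, i ≤ j → A i j ≤ A i i)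
    (hApos : ∀ j, 0 < A j j)
    (TA : Fin l → (H →ₗ[ℂ] E))
    (hTA : ∀ j, TA j =
        (Complex.ofReal (Real.sqrt (1 - ∑ i ∈ Finset.univ.filter (fun i => i ≤ j), A i j)))
            • emb.toLinearMap
        + ∑ i ∈ Finset.univ.filter (fun i => i ≤ j),
            (Complex.ofReal (Real.sqrt (A i j))) • (T i).toLinearMap)
    (lam : Fin l → ℂ) (y : Fin l → H)
    (hynorm : ∀ j, ‖y j‖ = 1)
    (h' : E) (hh' : h' = ∑ j, lam j • TA j (y j)) :
    ∀ i, ‖lam i‖ ≤ ‖h'‖ *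
        ∑ j ∈ Finset.univ.filter (fun j => i ≤ j),
          (2 : ℝ) ^ ((j : ℕ) - (i : ℕ)) * (A j j) ^ (-(1/2) : ℝ) := by
  obtain rfl : TA = tiltedMap emb T A := funext hTA
  have hrec (i : Fin l) := hh' ▸
    norm_coeff_le_of_tiltedMap horth1 horth2 (hAdiag i) (hApos i) lam hynorm
  have hweight (j : Fin l) : 0 ≤ ‖h'‖ * A j j ^ (-(1 / 2) : ℝ) :=
    mul_nonneg (norm_nonneg _) (Real.rpow_nonneg (hApos j).le _)
  intro i
  simpa only [mul_sum, mul_left_comm] using Fin.le_sum_two_pow_mul_of_le_add_sum hweight hrec i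

/-- Coefficient bound from the proof of the `A`-tilted span proposition:
if `h' = ∑ⱼ λⱼ T_{j,A}(yⱼ)` with unit vectors `yⱼ ∈ Wⱼ`, then
`|λᵢ| ≤ ‖h'‖ ∑_{j≥i} 2^{j-i} α_{jj}^{-1/2}`. -/
theorem stmt6 {H E : Type*}
    [NormedAddCommGroup H] [InnerProductSpace ℂ H] [FiniteDimensional ℂ H]
    [NormedAddCommGroup E] [InnerProductSpace ℂ E] [FiniteDimensional ℂ E]
    {l : ℕ} (hl : 0 < l)
    (emb : H →ₗᵢ[ℂ] E) (T : Fin l → (H →ₗᵢ[ℂ] E))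
    (horth1 : ∀ j, ∀ u v : H, (inner ℂ (emb u) (T j v) : ℂ) = 0)
    (horth2 : ∀ i j, i ≠ j → ∀ u v : H, (inner ℂ (T i u) (T j v) : ℂ) = 0)
    (A : Fin l → Fin l → ℝ)
    (hA01 : ∀ i j, 0 ≤ A i j ∧ A i j ≤ 1)
    (hAtri : ∀ i j, j < i → A i j = 0)
    (hAdiag : ∀ i j, i ≤ j → A i j ≤ A i i)
    (hAsub : ∀ j, ∑ i ∈ Finset.univ.filter (fun i => i ≤ j), A i j ≤ 1)
    (hApos : ∀ j, 0 < A j j)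
    (W : Fin l → Submodule ℂ H)
    (TA : Fin l → (H →ₗ[ℂ] E))
    (hTA : ∀ j, TA j =
        (Complex.ofReal (Real.sqrt (1 - ∑ i ∈ Finset.univ.filter (fun i => i ≤ j), A i j)))
            • emb.toLinearMap
        + ∑ i ∈ Finset.univ.filter (fun i => i ≤ j),
            (Complex.ofReal (Real.sqrt (A i j))) • (T i).toLinearMap)
    (lam : Fin l → ℂ) (y : Fin l → H)
    (hy : ∀ j, y j ∈ W j) (hynorm : ∀ j, ‖y j‖ = 1)
    (h' : E) (hh' : h' = ∑ j, lam j • TA j (y j)) :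
    ∀ i, ‖lam i‖ ≤ ‖h'‖ *
        ∑ j ∈ Finset.univ.filter (fun j => i ≤ j),
          (2 : ℝ) ^ ((j : ℕ) - (i : ℕ)) * (A j j) ^ (-(1/2) : ℝ) :=
  stmt6_general emb T horth1 horth2 A hAdiag hApos TA hTA lam y hynorm h' hh'
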